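/- In ℂ³ ⊗ ℂ³, consider the five (unnormalized) Tiles product vectors: |0⟩⊗(|0⟩−|1⟩), (|0⟩−|1⟩)⊗|2⟩, |2⟩⊗(|1⟩−|2⟩), (|1⟩−|2⟩)⊗|0⟩, (|0⟩+|1⟩+|2⟩)⊗(|0⟩+|1⟩+|2⟩). These five vectors are pairwise orthogonal, and there is no nonzero product vector u ⊗ w ∈ ℂ³ ⊗ ℂ³ orthogonal to all five of them. -/

import Mathlib

open scoped ComplexConjugate

/-- The product (tensor) vector u ⊗ w in ℂ^{d₁} ⊗ ℂ^{d₂} ≅ ℂ^{d₁·d₂}. -/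
noncomputable def tp {d₁ d₂ : ℕ} (u : EuclideanSpace ℂ (Fin d₁))
    (w : EuclideanSpace ℂ (Fin d₂)) : EuclideanSpace ℂ (Fin d₁ × Fin d₂) :=
  WithLp.toLp 2 (fun p => u p.1 * w p.2)

/-- The standard basis vector |i⟩ of ℂ³. -/
noncomputable def e (i : Fin 3) : EuclideanSpace ℂ (Fin 3) := EuclideanSpace.single i 1

/-! Each product ⟪aᵢ ⊗ bᵢ, u ⊗ w⟫ = ⟪aᵢ, u⟫⟪bᵢ, w⟫ vanishes, so u ⊥ aᵢ or w ⊥ bᵢ for each of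
the five indices; by pigeonhole this happens on one side for at least three indices. Any three
of the five Tiles vectors aᵢ (and any three of the bᵢ) span ℂ³, so u = 0 or w = 0. -/

section TensorProduct

variable {d₁ d₂ : ℕ}

theorem inner_tp (u u' : EuclideanSpace ℂ (Fin d₁)) (w w' : EuclideanSpace ℂ (Fin d₂)) :
    inner ℂ (tp u w) (tp u' w') = inner ℂ u u' * inner ℂ w w' := by
  simp only [tp, PiLp.inner_apply, Fintype.sum_prod_type, Finset.sum_mul_sum, RCLike.inner_apply,
    map_mul]
  exact Finset.sum_congr rfl fun _ _ => Finset.sum_congr rfl fun _ _ => by ring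

theorem tp_eq_zero_iff (u : EuclideanSpace ℂ (Fin d₁)) (w : EuclideanSpace ℂ (Fin d₂)) :
    tp u w = 0 ↔ u = 0 ∨ w = 0 := by
  rw [← inner_self_eq_zero (𝕜 := ℂ), inner_tp, mul_eq_zero, inner_self_eq_zero,
    inner_self_eq_zero]

end TensorProduct

theorem inner_e_left (i : Fin 3) (u : EuclideanSpace ℂ (Fin 3)) : inner ℂ (e i) u = u i := by
  simp [e, EuclideanSpace.inner_single_left]

theorem e_apply (i j : Fin 3) : e i j = if j = i then 1 else 0 := by
  simp [e]

/-- With u = (a, b, c) and w = (x, y, z), hypothesis hᵢ says u ⊥ aᵢ or w ⊥ bᵢ. -/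
theorem tiles_coords_eq_zero {a b c x y z : ℂ} (h₀ : a = 0 ∨ x - y = 0) (h₁ : a - b = 0 ∨ z = 0)
    (h₂ : c = 0 ∨ y - z = 0) (h₃ : b - c = 0 ∨ x = 0) (h₄ : a + b + c = 0 ∨ x + y + z = 0) :
    (a = 0 ∧ b = 0 ∧ c = 0) ∨ (x = 0 ∧ y = 0 ∧ z = 0) := by
  grind

theorem eq_zero_of_coords_eq_zero {u : EuclideanSpace ℂ (Fin 3)} (h₀ : u 0 = 0)
    (h₁ : u 1 = 0) (h₂ : u 2 = 0) : u = 0 := by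
  ext i
  fin_cases i <;> assumption

/-- the five Tiles product vectors in ℂ³ ⊗ ℂ³ are pairwise
orthogonal and no nonzero product vector is orthogonal to all five of them
(the Tiles set is an orthogonal unextendible product basis). -/
theorem stmt7 (t : Fin 5 → EuclideanSpace ℂ (Fin 3 × Fin 3))
    (ht : t = ![tp (e 0) (e 0 - e 1),
                tp (e 0 - e 1) (e 2),
                tp (e 2) (e 1 - e 2),
                tp (e 1 - e 2) (e 0),
                tp (e 0 + e 1 + e 2) (e 0 + e 1 + e 2)]) :
    (∀ i j, i ≠ j → inner ℂ (t i) (t j) = (0 : ℂ)) ∧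
    ¬ ∃ (u w : EuclideanSpace ℂ (Fin 3)),
        tp u w ≠ 0 ∧ ∀ i, inner ℂ (t i) (tp u w) = (0 : ℂ) := by
  subst ht
  refine ⟨fun i j hij => ?_, ?_⟩
  · fin_cases i <;> fin_cases j <;>
      simp only [Fin.reduceFinMk, Matrix.cons_val, ne_eq, not_true_eq_false, inner_tp,
        inner_add_left, inner_sub_left, inner_e_left] at hij ⊢ <;>
      simp [e_apply]
  · rintro ⟨u, w, hne, horth⟩
    simp only [Fin.forall_fin_succ, IsEmpty.forall_iff, and_true, Matrix.cons_val_zero,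
      Matrix.cons_val_succ, inner_tp, inner_add_left, inner_sub_left, inner_e_left,
      mul_eq_zero] at horth
    obtain ⟨h₀, h₁, h₂, h₃, h₄⟩ := horth
    refine hne ((tp_eq_zero_iff u w).mpr ?_)
    rcases tiles_coords_eq_zero h₀ h₁ h₂ h₃ h₄ with ⟨ha, hb, hc⟩ | ⟨hx, hy, hz⟩
    · exact .inl (eq_zero_of_coords_eq_zero ha hb hc)
    · exact .inr (eq_zero_of_coords_eq_zero hx hy hz)
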